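/- arXiv:2210.10701 — 2 statements merged into one kernel-verified Lean document; each statement's English description precedes it below -/
import Mathlib

section
/- Let f : X → X be continuous on a compact metric space, λ_n a probability measure, μ_n = (1/n) Σ_{h=0}^{n-1} f^h_* λ_n, and P a finite measurable partition of X. Then for all n ≥ 2 and 0 < q < n, q · H_{λ_n}(⋁_{h=0}^{n-1} f^{-h} P) ≤ n · H_{μ_n}(⋁_{i=0}^{q-1} f^{-i} P) + 2 q^2 log(Card P). -/
/-! Fix a phase `j < q`. The times `0, …, n - 1` split into the blocks
`[j + r q, j + r q + q)`, `r < (n - j) / q`, and fewer than `2 q` leftover times at the two ends.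
Subadditivity of entropy under joins bounds `H_λ(⋁_{h<n} f^{-h} P)` by the block entropies plus
`2 q log (Card P)`, and the block starting at `k` has entropy at most
`H_{f^k_* λ}(⋁_{i<q} f^{-i} P)`. Summing over the `q` phases, every `k < n` is the start of at
most one block, and concavity of `x ↦ -x log x` turns `∑_{k<n} H_{f^k_* λ}` into at most
`n H_μ`. -/

open MeasureTheory Filter
open scoped ENNReal

/-- The (Shannon) entropy of a finite measurable partition `P` under `ν`. -/
noncomputable def partEntropy {X : Type*} [MeasurableSpace X] {ι : Type*} [Fintype ι]
    (ν : Measure X) (P : ι → Set X) : ℝ :=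
  ∑ i, Real.negMulLog ((ν (P i)).toReal)

open Finset Real

theorem Real.negMulLog_le_neg_mul_log_add_sub {x y : ℝ} (hx : 0 ≤ x) (hy : 0 < y) :
    negMulLog x ≤ -x * log y + y - x := by
  rcases hx.eq_or_lt with rfl | hx
  · simpa using hy.le
  have h := mul_le_mul_of_nonneg_left (log_le_sub_one_of_pos (div_pos hy hx)) hx.le
  rw [log_div hy.ne' hx.ne', mul_sub, mul_sub, mul_div_cancel₀ _ hx.ne'] at h
  rw [negMulLog]
  linarith

section

variable {X : Type*} [MeasurableSpace X]

structure IsMeasurablePartition {ι : Type*} (P : ι → Set X) : Prop where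
  measurableSet : ∀ i, MeasurableSet (P i)
  pairwise_disjoint : Pairwise (Function.onFun Disjoint P)
  iUnion_eq_univ : ⋃ i, P i = Set.univ

theorem partEntropy_nonneg {ι : Type*} [Fintype ι] (ν : Measure X) [IsProbabilityMeasure ν]
    (Q : ι → Set X) : 0 ≤ partEntropy ν Q :=
  sum_nonneg fun _ _ => negMulLog_nonneg measureReal_nonneg measureReal_le_one

theorem partEntropy_le_of_injective {ι κ : Type*} [Fintype ι] [Fintype κ]
    (ν ρ : Measure X) [IsProbabilityMeasure ρ] {C : ι → Set X} {D : κ → Set X}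
    (g : ι → κ) (hg : Function.Injective g) (h : ∀ c, ν (C c) = ρ (D (g c))) :
    partEntropy ν C ≤ partEntropy ρ D := by
  classical
  calc partEntropy ν C = ∑ d ∈ univ.image g, negMulLog ((ρ (D d)).toReal) := by
        rw [sum_image fun a _ b _ hab => hg hab]
        exact sum_congr rfl fun c _ => by rw [h c]
    _ ≤ partEntropy ρ D :=
        sum_le_sum_of_subset_of_nonneg (subset_univ _)
          fun _ _ _ => negMulLog_nonneg measureReal_nonneg measureReal_le_one

theorem sum_partEntropy_le_card_mul {ι κ : Type*} [Fintype ι] (s : Finset κ)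
    (ν : κ → Measure X) [∀ k, IsFiniteMeasure (ν k)] (Q : ι → Set X) :
    ∑ k ∈ s, partEntropy (ν k) Q
      ≤ #s * partEntropy ((#s : ℝ≥0∞)⁻¹ • ∑ k ∈ s, ν k) Q := by
  rcases s.eq_empty_or_nonempty with rfl | hs
  · simp
  have hcard : (0 : ℝ) < #s := by exact_mod_cast hs.card_pos
  have jensen : ∀ i, ∑ k ∈ s, (#s : ℝ)⁻¹ * negMulLog ((ν k (Q i)).toReal)
      ≤ negMulLog ((((#s : ℝ≥0∞)⁻¹ • ∑ k ∈ s, ν k) (Q i)).toReal) := by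
    intro i
    have := concaveOn_negMulLog.le_map_sum (t := s) (w := fun _ => (#s : ℝ)⁻¹)
      (p := fun k => (ν k (Q i)).toReal) (fun _ _ => by positivity) (by simp [hcard.ne'])
      (fun _ _ => Set.mem_Ici.2 ENNReal.toReal_nonneg)
    rw [Measure.smul_apply, Measure.finsetSum_apply, smul_eq_mul, ENNReal.toReal_mul,
      ENNReal.toReal_sum fun k _ => measure_ne_top _ _, ENNReal.toReal_inv,
      ENNReal.toReal_natCast, mul_sum]
    simpa only [smul_eq_mul] using this
  calc ∑ k ∈ s, partEntropy (ν k) Q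
      = #s * ∑ i, ∑ k ∈ s, (#s : ℝ)⁻¹ * negMulLog ((ν k (Q i)).toReal) := by
        simp only [partEntropy, ← mul_sum]
        rw [sum_comm, mul_inv_cancel_left₀ hcard.ne']
    _ ≤ #s * partEntropy ((#s : ℝ≥0∞)⁻¹ • ∑ k ∈ s, ν k) Q :=
        mul_le_mul_of_nonneg_left (sum_le_sum fun i _ => jensen i) hcard.le

namespace IsMeasurablePartition

variable {ι : Type*} [Fintype ι] {P : ι → Set X}

theorem sum_measureReal_inter (hP : IsMeasurablePartition P) (ν : Measure X) [IsFiniteMeasure ν]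
    {S : Set X} (hS : MeasurableSet S) : ∑ i, ν.real (S ∩ P i) = ν.real S := by
  rw [← measureReal_iUnion_fintype (fun i j hij => (hP.pairwise_disjoint hij).mono
    Set.inter_subset_right Set.inter_subset_right) fun i => hS.inter (hP.measurableSet i),
    ← Set.inter_iUnion, hP.iUnion_eq_univ, Set.inter_univ]

theorem sum_measureReal (hP : IsMeasurablePartition P) (ν : Measure X)
    [IsProbabilityMeasure ν] : ∑ i, ν.real (P i) = 1 := by
  simpa using hP.sum_measureReal_inter ν MeasurableSet.univ

theorem partEntropy_le_log_card (hP : IsMeasurablePartition P) (ν : Measure X)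
    [IsProbabilityMeasure ν] : partEntropy ν P ≤ log (Fintype.card ι) := by
  rcases isEmpty_or_nonempty ι with hι | hι
  · simp [partEntropy]
  have hN : (0 : ℝ) < Fintype.card ι := by exact_mod_cast Fintype.card_pos
  calc partEntropy ν P
      ≤ ∑ i, (-ν.real (P i) * log (Fintype.card ι : ℝ)⁻¹ + (Fintype.card ι : ℝ)⁻¹
          - ν.real (P i)) :=
        sum_le_sum fun i _ => negMulLog_le_neg_mul_log_add_sub measureReal_nonneg (inv_pos.2 hN)
    _ = log (Fintype.card ι) := by
        simp [sum_add_distrib, sum_sub_distrib, ← sum_mul, hP.sum_measureReal ν, hN.ne']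

theorem partEntropy_inter_le {α β : Type*} [Fintype α] [Fintype β] {A : α → Set X}
    {B : β → Set X} (hA : IsMeasurablePartition A) (hB : IsMeasurablePartition B)
    (ν : Measure X) [IsProbabilityMeasure ν] :
    partEntropy ν (fun p : α × β => A p.1 ∩ B p.2)
      ≤ partEntropy ν A + partEntropy ν B := by
  set p := fun a b => ν.real (A a ∩ B b)
  have gibbs : ∀ a b, negMulLog (p a b) ≤ -p a b * log (ν.real (A a))
      + -p a b * log (ν.real (B b)) + (ν.real (A a) * ν.real (B b) - p a b) := by
    intro a b
    rcases (measureReal_nonneg : 0 ≤ p a b).eq_or_lt with h0 | hpos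
    · rw [show p a b = 0 from h0.symm]
      simpa using mul_nonneg measureReal_nonneg measureReal_nonneg
    have hw := hpos.trans_le (measureReal_mono Set.inter_subset_left)
    have hv := hpos.trans_le (measureReal_mono Set.inter_subset_right)
    have := negMulLog_le_neg_mul_log_add_sub hpos.le (mul_pos hw hv)
    rw [log_mul hw.ne' hv.ne'] at this
    linarith
  have margA : ∀ a, ∑ b, p a b = ν.real (A a) :=
    fun a => hB.sum_measureReal_inter ν (hA.measurableSet a)
  have margB : ∀ b, ∑ a, p a b = ν.real (B b) := fun b => by
    simpa only [p, Set.inter_comm] using hA.sum_measureReal_inter ν (hB.measurableSet b)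
  have entropyA : ∑ a, ∑ b, -p a b * log (ν.real (A a)) = partEntropy ν A := by
    simp only [← sum_mul, sum_neg_distrib, margA]
    rfl
  have entropyB : ∑ a, ∑ b, -p a b * log (ν.real (B b)) = partEntropy ν B := by
    rw [sum_comm]
    simp only [← sum_mul, sum_neg_distrib, margB]
    rfl
  have mass : ∑ a, ∑ b, (ν.real (A a) * ν.real (B b) - p a b) = 0 := by
    simp [sum_sub_distrib, ← mul_sum, margA, hB.sum_measureReal ν]
  calc partEntropy ν (fun p : α × β => A p.1 ∩ B p.2) = ∑ a, ∑ b, negMulLog (p a b) :=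
        Fintype.sum_prod_type _
    _ ≤ ∑ a, ∑ b, (-p a b * log (ν.real (A a)) + -p a b * log (ν.real (B b))
          + (ν.real (A a) * ν.real (B b) - p a b)) :=
        sum_le_sum fun a _ => sum_le_sum fun b _ => gibbs a b
    _ = partEntropy ν A + partEntropy ν B := by
        simp only [sum_add_distrib, entropyA, entropyB, mass, add_zero]

end IsMeasurablePartition

variable {ι : Type*}

/-- The cell of `⋁_{h ∈ s} f^{-h} P` with itinerary `a`. -/
def iterateJoin (f : X → X) (P : ι → Set X) (s : Finset ℕ) (a : s → ι) : Set X :=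
  ⋂ h : s, f^[h] ⁻¹' P (a h)

namespace IsMeasurablePartition

variable {P : ι → Set X} {f : X → X}

theorem iterateJoin (hP : IsMeasurablePartition P) (hf : Measurable f) (s : Finset ℕ) :
    IsMeasurablePartition (iterateJoin f P s) where
  measurableSet _ := .iInter fun h => hf.iterate h (hP.measurableSet _)
  pairwise_disjoint a a' hne := by
    obtain ⟨h, hh⟩ := Function.ne_iff.mp hne
    exact ((hP.pairwise_disjoint hh).preimage _).mono (Set.iInter_subset _ h)
      (Set.iInter_subset _ h)
  iUnion_eq_univ := by
    choose idx hidx using fun x => Set.mem_iUnion.mp (hP.iUnion_eq_univ ▸ Set.mem_univ x)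
    exact Set.eq_univ_of_forall fun x =>
      Set.mem_iUnion.2 ⟨fun h => idx (f^[h] x), Set.mem_iInter.2 fun h => hidx _⟩

end IsMeasurablePartition

variable [Fintype ι]

theorem partEntropy_iterateJoin_range (ν : Measure X) (f : X → X) (P : ι → Set X) (n : ℕ) :
    partEntropy ν (iterateJoin f P (range n))
      = partEntropy ν (fun a : Fin n → ι => ⋂ h : Fin n, f^[(h : ℕ)] ⁻¹' P (a h)) := by
  let e : Fin n ≃ range n :=
    Fin.equivSubtype.trans (Equiv.subtypeEquivRight fun _ => mem_range.symm)
  refine (Fintype.sum_equiv (e.arrowCongr (Equiv.refl ι)) _ _ fun a => ?_).symm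
  rw [iterateJoin, ← e.surjective.iInter_comp]
  simp [e]

section

variable {P : ι → Set X} {f : X → X} (hP : IsMeasurablePartition P) (hf : Measurable f)
  (ν : Measure X) [IsProbabilityMeasure ν]
include hP hf

theorem partEntropy_iterateJoin_union_le (s t : Finset ℕ) :
    partEntropy ν (iterateJoin f P (s ∪ t))
      ≤ partEntropy ν (iterateJoin f P s) + partEntropy ν (iterateJoin f P t) := by
  refine (partEntropy_le_of_injective ν ν
    (fun a => (fun h => a ⟨h, mem_union_left _ h.2⟩, fun h => a ⟨h, mem_union_right _ h.2⟩))
    ?_ fun a => ?_).trans ((hP.iterateJoin hf s).partEntropy_inter_le (hP.iterateJoin hf t) ν)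
  · intro a a' he
    funext ⟨h, hst⟩
    rcases mem_union.1 hst with hs | ht
    · exact congrFun (congrArg Prod.fst he) ⟨h, hs⟩
    · exact congrFun (congrArg Prod.snd he) ⟨h, ht⟩
  · congr 1
    ext x
    simp only [iterateJoin, Set.mem_iInter, Set.mem_inter_iff, Subtype.forall, mem_union]
    constructor
    · exact fun hx => ⟨fun i hi => hx i (Or.inl hi), fun i hi => hx i (Or.inr hi)⟩
    · rintro ⟨hs, ht⟩ i (hi | hi)
      exacts [hs i hi, ht i hi]

theorem partEntropy_iterateJoin_le_card_mul_log (s : Finset ℕ) :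
    partEntropy ν (iterateJoin f P s) ≤ #s * log (Fintype.card ι) := by
  simpa [Fintype.card_fun, log_pow] using (hP.iterateJoin hf s).partEntropy_le_log_card ν

theorem partEntropy_iterateJoin_Ico_le_sum (a q d : ℕ) :
    partEntropy ν (iterateJoin f P (Ico a (a + d * q)))
      ≤ ∑ r ∈ range d,
          partEntropy ν (iterateJoin f P (Ico (a + r * q) (a + r * q + q))) := by
  induction d with
  | zero =>
    have : IsEmpty (Ico a (a + 0 * q)) := ⟨fun h => by simpa using h.2⟩
    simp [partEntropy, iterateJoin]
  | succ d ih =>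
    rw [sum_range_succ, ← Ico_union_Ico_eq_Ico (a := a) (b := a + d * q) (by omega)
      (by rw [add_mul]; omega), add_mul, one_mul, ← add_assoc]
    exact (partEntropy_iterateJoin_union_le hP hf ν _ _).trans (by linarith)

theorem partEntropy_iterateJoin_Ico_le_map (k m : ℕ) :
    partEntropy ν (iterateJoin f P (Ico k (k + m)))
      ≤ partEntropy (ν.map f^[k]) (iterateJoin f P (range m)) := by
  have := Measure.isProbabilityMeasure_map (μ := ν) (hf.iterate k).aemeasurable
  refine partEntropy_le_of_injective _ _
    (fun a i => a ⟨i + k, mem_Ico.2 (by have := mem_range.1 i.2; omega)⟩) ?_ fun a => ?_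
  · intro a a' he
    funext ⟨h, hh⟩
    have hh := mem_Ico.1 hh
    simpa [Nat.sub_add_cancel hh.1] using congrFun he ⟨h - k, mem_range.2 (by omega)⟩
  · rw [Measure.map_apply (hf.iterate k) ((hP.iterateJoin hf _).measurableSet _)]
    congr 1
    ext x
    simp only [iterateJoin, Set.mem_iInter, Set.mem_preimage, ← Function.iterate_add_apply]
    constructor
    · exact fun hx i => hx _
    · rintro hx ⟨h, hh⟩
      have hh' := mem_Ico.1 hh
      simpa [Nat.sub_add_cancel hh'.1] using hx ⟨h - k, mem_range.2 (by omega)⟩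

theorem partEntropy_iterateJoin_range_le_sum {n q j : ℕ} (hjq : j < q) (hjn : j ≤ n) :
    partEntropy ν (iterateJoin f P (range n))
      ≤ ∑ r ∈ range ((n - j) / q),
          partEntropy (ν.map f^[j + r * q]) (iterateJoin f P (range q))
        + 2 * q * log (Fintype.card ι) := by
  have hdiv := Nat.div_add_mod' (n - j) q
  have hmod := Nat.mod_lt (n - j) (j.zero_le.trans_lt hjq)
  set d := (n - j) / q
  have hd : j + d * q ≤ n := by omega
  have hcard : j + (n - (j + d * q)) ≤ 2 * q := by omega
  have hboundary := mul_le_mul_of_nonneg_right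
    (by exact_mod_cast hcard : (j : ℝ) + (n - (j + d * q) : ℕ) ≤ 2 * q)
    (log_natCast_nonneg (Fintype.card ι))
  have hhead := partEntropy_iterateJoin_le_card_mul_log hP hf ν (Ico 0 j)
  have hmid := (partEntropy_iterateJoin_Ico_le_sum hP hf ν j q d).trans
    (sum_le_sum fun r _ => partEntropy_iterateJoin_Ico_le_map hP hf ν (j + r * q) q)
  have htail := partEntropy_iterateJoin_le_card_mul_log hP hf ν (Ico (j + d * q) n)
  have hsplit :=
    partEntropy_iterateJoin_union_le hP hf ν (Ico 0 (j + d * q)) (Ico (j + d * q) n)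
  have hsplit' := partEntropy_iterateJoin_union_le hP hf ν (Ico 0 j) (Ico j (j + d * q))
  rw [Ico_union_Ico_eq_Ico (Nat.zero_le _) hd, ← range_eq_Ico] at hsplit
  rw [Ico_union_Ico_eq_Ico (Nat.zero_le j) (j.le_add_right _)] at hsplit'
  rw [Nat.card_Ico, Nat.sub_zero] at hhead
  rw [Nat.card_Ico] at htail
  rw [add_mul] at hboundary
  linarith

end

theorem Finset.sum_range_sum_range_div_le {M : Type*} [AddCommMonoid M] [PartialOrder M]
    [IsOrderedAddMonoid M] (g : ℕ → M) (hg : ∀ k, 0 ≤ g k) (n q : ℕ) :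
    ∑ j ∈ range q, ∑ r ∈ range ((n - j) / q), g (j + r * q) ≤ ∑ k ∈ range n, g k := by
  set T := (range q).sigma fun j => range ((n - j) / q)
  have hinj : Set.InjOn (fun p : Σ _ : ℕ, ℕ => p.1 + p.2 * q) T := by
    rintro ⟨j, r⟩ hp ⟨j', r'⟩ hp' he
    simp only [T, coe_sigma, Set.mem_sigma_iff, coe_range, Set.mem_Iio] at hp hp' he
    have hj : j = j' := by
      simpa [Nat.mod_eq_of_lt hp.1, Nat.mod_eq_of_lt hp'.1] using congrArg (· % q) he
    subst hj
    have : r * q = r' * q := by omega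
    rw [Nat.eq_of_mul_eq_mul_right (j.zero_le.trans_lt hp.1) this]
  have hsub : T.image (fun p => p.1 + p.2 * q) ⊆ range n := by
    simp only [subset_iff, mem_image, mem_sigma, mem_range, T]
    rintro _ ⟨⟨j, r⟩, ⟨hj, hr⟩, rfl⟩
    dsimp only at hj hr ⊢
    have := (Nat.le_div_iff_mul_le (j.zero_le.trans_lt hj)).1 hr
    rw [Nat.succ_mul] at this
    omega
  calc ∑ j ∈ range q, ∑ r ∈ range ((n - j) / q), g (j + r * q)
      = ∑ k ∈ T.image (fun p => p.1 + p.2 * q), g k := by rw [sum_image hinj, sum_sigma]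
    _ ≤ ∑ k ∈ range n, g k := sum_le_sum_of_subset_of_nonneg hsub fun k _ _ => hg k

end

theorem stmt_1_general {X : Type*} [MetricSpace X] [MeasurableSpace X]
    [BorelSpace X]
    (f : X → X) (hf : Continuous f)
    {ι : Type*} [Fintype ι] (P : ι → Set X)
    (hmeas : ∀ i, MeasurableSet (P i))
    (hdisj : Pairwise (Function.onFun Disjoint P))
    (hcover : (⋃ i, P i) = Set.univ)
    (lam : Measure X) (hlam : IsProbabilityMeasure lam)
    (n q : ℕ) (hqn : q < n)
    (μ : Measure X)
    (hμ : μ = (n : ℝ≥0∞)⁻¹ • ∑ k ∈ Finset.range n, Measure.map (f^[k]) lam) :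
    (q : ℝ) * partEntropy lam
        (fun a : Fin n → ι => ⋂ h : Fin n, f^[(h : ℕ)] ⁻¹' P (a h))
      ≤ (n : ℝ) * partEntropy μ
          (fun a : Fin q → ι => ⋂ i : Fin q, f^[(i : ℕ)] ⁻¹' P (a i))
        + 2 * (q : ℝ) ^ 2 * Real.log (Fintype.card ι) := by
  have hP : IsMeasurablePartition P := ⟨hmeas, hdisj, hcover⟩
  have hfm := hf.measurable
  have hprob k := Measure.isProbabilityMeasure_map (μ := lam) (hfm.iterate k).aemeasurable
  rw [← partEntropy_iterateJoin_range, ← partEntropy_iterateJoin_range]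
  have hphase : ∀ j ∈ range q, partEntropy lam (iterateJoin f P (range n))
      ≤ ∑ r ∈ range ((n - j) / q),
          partEntropy (lam.map f^[j + r * q]) (iterateJoin f P (range q))
        + 2 * q * log (Fintype.card ι) := fun j hj =>
    partEntropy_iterateJoin_range_le_sum hP hfm lam (mem_range.1 hj)
      ((mem_range.1 hj).trans hqn).le
  have hreindex := sum_range_sum_range_div_le
    (fun k => partEntropy (lam.map f^[k]) (iterateJoin f P (range q)))
    (fun k => partEntropy_nonneg _ _) n q
  have havg := sum_partEntropy_le_card_mul (range n) (fun k => lam.map f^[k])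
    (iterateJoin f P (range q))
  rw [card_range, ← hμ] at havg
  calc (q : ℝ) * partEntropy lam (iterateJoin f P (range n))
      = ∑ j ∈ range q, partEntropy lam (iterateJoin f P (range n)) := by
        rw [sum_const, card_range, nsmul_eq_mul]
    _ ≤ ∑ j ∈ range q, (∑ r ∈ range ((n - j) / q),
          partEntropy (lam.map f^[j + r * q]) (iterateJoin f P (range q))
          + 2 * q * log (Fintype.card ι)) := sum_le_sum hphase
    _ ≤ n * partEntropy μ (iterateJoin f P (range q)) + 2 * q ^ 2 * log (Fintype.card ι) := by
        rw [sum_add_distrib, sum_const, card_range, nsmul_eq_mul]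
        nlinarith

/-- Misiurewicz's lemma relating the entropy of the refined partition
under `λ_n` with the entropy under the averaged pushforwards `μ_n`. -/
theorem stmt_1 {X : Type*} [MetricSpace X] [CompactSpace X] [MeasurableSpace X]
    [BorelSpace X]
    (f : X → X) (hf : Continuous f)
    {ι : Type*} [Fintype ι] (P : ι → Set X)
    (hmeas : ∀ i, MeasurableSet (P i))
    (hdisj : Pairwise (Function.onFun Disjoint P))
    (hcover : (⋃ i, P i) = Set.univ)
    (lam : Measure X) (hlam : IsProbabilityMeasure lam)
    (n q : ℕ) (hn : 2 ≤ n) (hq : 0 < q) (hqn : q < n)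
    (μ : Measure X)
    (hμ : μ = (n : ℝ≥0∞)⁻¹ • ∑ k ∈ Finset.range n, Measure.map (f^[k]) lam) :
    (q : ℝ) * partEntropy lam
        (fun a : Fin n → ι => ⋂ h : Fin n, f^[(h : ℕ)] ⁻¹' P (a h))
      ≤ (n : ℝ) * partEntropy μ
          (fun a : Fin q → ι => ⋂ i : Fin q, f^[(i : ℕ)] ⁻¹' P (a i))
        + 2 * (q : ℝ) ^ 2 * Real.log (Fintype.card ι) :=
  stmt_1_general f hf P hmeas hdisj hcover lam hlam n q hqn μ hμ
end

section
/- Let f : M → M be a C^1 diffeomorphism with a partially hyperbolic invariant set X with splitting E^u ⊕ E^{cs} and constants C₂ < 1/ρ < C₁. Then the local unstable manifold W^u_δ(x) = {y ∈ M : d(f^{−n}x, f^{−n}y) ≤ δ for all n ≥ 0 and d(f^{−n}x, f^{−n}y)/ρ^n → 0} satisfies: there exist C > 0 and λ ∈ (C₁^{−1}, 1) such that for every n ≥ 0 and y ∈ W^u_δ(x), d(f^{−n}x, f^{−n}y) ≤ C λ^n d(x, y). -/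
/-!
Write `wₙ = f⁻ⁿ y - f⁻ⁿ x = uₙ + sₙ` along `Eᵘ ⊕ Eᶜˢ` at `f⁻ⁿ x`. The rates alone bound the two
projections uniformly on `X`: `C₁‖u‖ ≤ ‖Df u‖ ≤ ‖Df‖‖u + s‖ + C₂‖s‖`. Since `f` is uniformly
close to its derivative near the compact set `X`, one step of `f` gives
`‖uₙ‖ ≥ C₁‖uₙ₊₁‖ - ε‖wₙ₊₁‖` and `‖sₙ‖ ≤ C₂‖sₙ₊₁‖ + ε‖wₙ₊₁‖` with `ε` as small as we like.
Then the cone `‖s‖ ≤ ‖u‖` is mapped into itself by `f`. If the backward orbit of `y` ever left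
it, `‖sₙ‖` would grow at least like `(C₂ + 2ε)⁻ⁿ ≥ ρⁿ`, against `d(f⁻ⁿx, f⁻ⁿy) / ρⁿ → 0`;
inside the cone `‖uₙ‖` shrinks by the factor `λ = (C₁ - 2ε)⁻¹ < 1` at each step.
-/

open Filter Topology Set

theorem Submodule.projection_map_apply_of_map_le {R E F : Type*} [Ring R] [AddCommGroup E]
    [Module R E] [AddCommGroup F] [Module R F] {p q : Submodule R E} {p' q' : Submodule R F}
    (h : IsCompl p q) (h' : IsCompl p' q') (A : E →ₗ[R] F) (hp : p.map A ≤ p')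
    (hq : q.map A ≤ q') (x : E) :
    p'.projection q' h' (A x) = A (p.projection q h x) := by
  conv_lhs => rw [← projection_add_projection_eq_self h x, map_add, map_add]
  rw [projection_apply_of_mem_left h' (hp (mem_map_of_mem (projection_apply_mem h x))),
    projection_apply_of_mem_right h' (hq (mem_map_of_mem (projection_apply_mem h.symm x))),
    add_zero]

theorem ContinuousLinearMap.sub_mul_norm_le_mul_norm_add {E F : Type*}
    [SeminormedAddCommGroup E] [NormedSpace ℝ E] [SeminormedAddCommGroup F] [NormedSpace ℝ F]
    (A : E →L[ℝ] F) {C₁ C₂ : ℝ} (hC₂ : 0 ≤ C₂) {u s : E} (hu : C₁ * ‖u‖ ≤ ‖A u‖)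
    (hs : ‖A s‖ ≤ C₂ * ‖s‖) : (C₁ - C₂) * ‖u‖ ≤ (‖A‖ + C₂) * ‖u + s‖ := by
  have hAu : ‖A u‖ ≤ ‖A‖ * ‖u + s‖ + ‖A s‖ := by
    calc ‖A u‖ = ‖A (u + s) - A s‖ := by rw [map_add, add_sub_cancel_right]
      _ ≤ ‖A‖ * ‖u + s‖ + ‖A s‖ := (norm_sub_le _ _).trans (by gcongr; exact A.le_opNorm _)
  have hs' : ‖s‖ ≤ ‖u‖ + ‖u + s‖ := by
    simpa [add_comm ‖u‖] using norm_sub_le (u + s) u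
  nlinarith [mul_le_mul_of_nonneg_left hs' hC₂]

theorem IsCompact.exists_norm_sub_sub_fderiv_le {E F : Type*} [NormedAddCommGroup E]
    [NormedSpace ℝ E] [NormedAddCommGroup F] [NormedSpace ℝ F] {f : E → F} (hf : ContDiff ℝ 1 f)
    {X : Set E} (hX : IsCompact X) {η : ℝ} (hη : 0 < η) :
    ∃ d > 0, ∀ z ∈ X, ∀ w, ‖w‖ ≤ d → ‖f (z + w) - f z - fderiv ℝ f z w‖ ≤ η * ‖w‖ := by
  obtain ⟨d, hd, hclose⟩ := Metric.mem_uniformity_dist.mp <|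
    hX.uniformContinuousAt_of_continuousAt (fderiv ℝ f)
      (fun z _ => (hf.continuous_fderiv one_ne_zero).continuousAt) (Metric.dist_mem_uniformity hη)
  refine ⟨d / 2, half_pos hd, fun z hz w hw => ?_⟩
  have hbound : ∀ p ∈ Metric.closedBall z ‖w‖, ‖fderiv ℝ f p - fderiv ℝ f z‖ ≤ η := by
    intro p hp
    rw [← dist_eq_norm, dist_comm]
    refine (hclose ?_ hz).le
    linarith [Metric.mem_closedBall'.mp hp]
  simpa using (convex_closedBall z ‖w‖).norm_image_sub_le_of_norm_fderiv_le'
    (fun p _ => hf.differentiable one_ne_zero p) hbound (Metric.mem_closedBall_self (norm_nonneg w))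
    (show z + w ∈ Metric.closedBall z ‖w‖ by simp [Metric.mem_closedBall, dist_eq_norm])

/-- `a n`, `b n`, `c n` model the norms of the unstable and centre-stable components of
`f⁻ⁿ y - f⁻ⁿ x` and the norm of `f⁻ⁿ y - f⁻ⁿ x` itself. -/
structure ConeRecurrence (a b c : ℕ → ℝ) (C₁ C₂ ε : ℝ) : Prop where
  nonneg_left : ∀ n, 0 ≤ a n
  nonneg_right : ∀ n, 0 ≤ b n
  le_add : ∀ n, c n ≤ a n + b n
  expand : ∀ n, C₁ * a (n + 1) - ε * c (n + 1) ≤ a n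
  contract : ∀ n, b n ≤ C₂ * b (n + 1) + ε * c (n + 1)

namespace ConeRecurrence

variable {a b c : ℕ → ℝ} {C₁ C₂ ε : ℝ}

theorem le_of_le_succ (h : ConeRecurrence a b c C₁ C₂ ε) (hε : 0 ≤ ε) (hC₂ : 0 ≤ C₂)
    (hgap : C₂ + 4 * ε ≤ C₁) {n : ℕ} (hn : b (n + 1) ≤ a (n + 1)) : b n ≤ a n := by
  have hc : ε * c (n + 1) ≤ ε * (2 * a (n + 1)) :=
    mul_le_mul_of_nonneg_left (by linarith [h.le_add (n + 1)]) hε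
  have ha : 0 ≤ a (n + 1) := h.nonneg_left _
  nlinarith [h.expand n, h.contract n, mul_le_mul_of_nonneg_left hn hC₂]

theorem lt_add_of_lt (h : ConeRecurrence a b c C₁ C₂ ε) (hε : 0 ≤ ε) (hC₂ : 0 ≤ C₂)
    (hgap : C₂ + 4 * ε ≤ C₁) {n : ℕ} (hn : a n < b n) (k : ℕ) : a (n + k) < b (n + k) := by
  induction k with
  | zero => exact hn
  | succ k ih => exact lt_of_not_ge fun hk => (h.le_of_le_succ hε hC₂ hgap hk).not_gt ih

theorem le_pow_mul_of_lt (h : ConeRecurrence a b c C₁ C₂ ε) (hε : 0 ≤ ε) (hC₂ : 0 ≤ C₂)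
    (hgap : C₂ + 4 * ε ≤ C₁) {n : ℕ} (hn : a n < b n) (k : ℕ) :
    b n ≤ (C₂ + 2 * ε) ^ k * b (n + k) := by
  induction k with
  | zero => simp
  | succ k ih =>
    have hstep : b (n + k) ≤ (C₂ + 2 * ε) * b (n + k + 1) := by
      have hlt : a (n + k + 1) < b (n + k + 1) := h.lt_add_of_lt hε hC₂ hgap hn (k + 1)
      have hc : ε * c (n + k + 1) ≤ ε * (2 * b (n + k + 1)) :=
        mul_le_mul_of_nonneg_left (by linarith [h.le_add (n + k + 1)]) hε
      linarith [h.contract (n + k)]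
    calc b n ≤ (C₂ + 2 * ε) ^ k * b (n + k) := ih
      _ ≤ (C₂ + 2 * ε) ^ k * ((C₂ + 2 * ε) * b (n + k + 1)) := by gcongr
      _ = (C₂ + 2 * ε) ^ (k + 1) * b (n + (k + 1)) := by ring_nf

theorem le_of_tendsto_div_pow (h : ConeRecurrence a b c C₁ C₂ ε) (hε : 0 ≤ ε) (hC₂ : 0 ≤ C₂)
    (hgap : C₂ + 4 * ε ≤ C₁) {Q ρ : ℝ} (hbc : ∀ n, b n ≤ Q * c n) (hρ : 0 < ρ)
    (hμ : C₂ + 2 * ε ≤ 1 / ρ) (hc : Tendsto (fun n => c n / ρ ^ n) atTop (𝓝 0)) (n : ℕ) :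
    b n ≤ a n := by
  by_contra! hn
  have hlim : Tendsto (fun k => ρ ^ n * (Q * (c (k + n) / ρ ^ (k + n)))) atTop (𝓝 0) := by
    simpa using ((hc.comp (tendsto_add_atTop_nat n)).const_mul Q).const_mul (ρ ^ n)
  have hbound : ∀ k, b n ≤ ρ ^ n * (Q * (c (k + n) / ρ ^ (k + n))) := fun k => by
    rw [add_comm k n]
    calc b n ≤ (C₂ + 2 * ε) ^ k * b (n + k) := h.le_pow_mul_of_lt hε hC₂ hgap hn k
      _ ≤ (1 / ρ) ^ k * (Q * c (n + k)) :=
        mul_le_mul (pow_le_pow_left₀ (by positivity) hμ k) (hbc _) (h.nonneg_right _)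
          (by positivity)
      _ = ρ ^ n * (Q * (c (n + k) / ρ ^ (n + k))) := by
        rw [pow_add, one_div, inv_pow]
        field_simp
  linarith [h.nonneg_left n, ge_of_tendsto' hlim hbound]

theorem pow_mul_le (h : ConeRecurrence a b c C₁ C₂ ε) (hε : 0 ≤ ε) (hpos : 0 ≤ C₁ - 2 * ε)
    (hcone : ∀ n, b n ≤ a n) (n : ℕ) : (C₁ - 2 * ε) ^ n * a n ≤ a 0 := by
  induction n with
  | zero => simp
  | succ n ih =>
    have hstep : (C₁ - 2 * ε) * a (n + 1) ≤ a n := by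
      have hc : ε * c (n + 1) ≤ ε * (2 * a (n + 1)) :=
        mul_le_mul_of_nonneg_left (by linarith [h.le_add (n + 1), hcone (n + 1)]) hε
      linarith [h.expand n]
    calc (C₁ - 2 * ε) ^ (n + 1) * a (n + 1) = (C₁ - 2 * ε) ^ n * ((C₁ - 2 * ε) * a (n + 1)) := by
          ring
      _ ≤ (C₁ - 2 * ε) ^ n * a n := by gcongr
      _ ≤ a 0 := ih

theorem le_two_mul_inv_pow_mul_of_tendsto (h : ConeRecurrence a b c C₁ C₂ ε) (hε : 0 ≤ ε)
    (hC₂ : 0 ≤ C₂) (hgap : C₂ + 4 * ε ≤ C₁) (hpos : 0 < C₁ - 2 * ε) {Q ρ : ℝ}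
    (hbc : ∀ n, b n ≤ Q * c n) (hρ : 0 < ρ) (hμ : C₂ + 2 * ε ≤ 1 / ρ)
    (hc : Tendsto (fun n => c n / ρ ^ n) atTop (𝓝 0)) (n : ℕ) :
    c n ≤ 2 * ((C₁ - 2 * ε)⁻¹ ^ n * a 0) := by
  have hcone := h.le_of_tendsto_div_pow hε hC₂ hgap hbc hρ hμ hc
  have ha : a n ≤ (C₁ - 2 * ε)⁻¹ ^ n * a 0 := by
    rw [inv_pow, ← div_eq_inv_mul, le_div_iff₀ (pow_pos hpos n), mul_comm]
    exact h.pow_mul_le hε hpos.le hcone n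
  linarith [h.le_add n, hcone n]

end ConeRecurrence

structure IsPartiallyHyperbolicSplitting {E : Type*} [NormedAddCommGroup E] [NormedSpace ℝ E]
    (f : E → E) (X : Set E) (Eu Ecs : E → Submodule ℝ E) (C₁ C₂ : ℝ) : Prop where
  isCompl : ∀ x ∈ X, IsCompl (Eu x) (Ecs x)
  map_unstable_le : ∀ x ∈ X, (Eu x).map (fderiv ℝ f x : E →ₗ[ℝ] E) ≤ Eu (f x)
  map_centerStable_le : ∀ x ∈ X, (Ecs x).map (fderiv ℝ f x : E →ₗ[ℝ] E) ≤ Ecs (f x)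
  expand : ∀ x ∈ X, ∀ v ∈ Eu x, C₁ * ‖v‖ ≤ ‖fderiv ℝ f x v‖
  contract : ∀ x ∈ X, ∀ v ∈ Ecs x, ‖fderiv ℝ f x v‖ ≤ C₂ * ‖v‖

namespace IsPartiallyHyperbolicSplitting

variable {E : Type*} [NormedAddCommGroup E] [NormedSpace ℝ E] {f : E → E} {X : Set E}
  {Eu Ecs : E → Submodule ℝ E} {C₁ C₂ : ℝ}

noncomputable def unstableProj (h : IsPartiallyHyperbolicSplitting f X Eu Ecs C₁ C₂) {x : E}
    (hx : x ∈ X) : E →ₗ[ℝ] E :=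
  (Eu x).projection (Ecs x) (h.isCompl x hx)

noncomputable def centerStableProj (h : IsPartiallyHyperbolicSplitting f X Eu Ecs C₁ C₂)
    {x : E} (hx : x ∈ X) : E →ₗ[ℝ] E :=
  (Ecs x).projection (Eu x) (h.isCompl x hx).symm

variable (h : IsPartiallyHyperbolicSplitting f X Eu Ecs C₁ C₂)

theorem unstableProj_add_centerStableProj {x : E} (hx : x ∈ X) (v : E) :
    h.unstableProj hx v + h.centerStableProj hx v = v :=
  Submodule.projection_add_projection_eq_self _ v

theorem unstableProj_apply_mem {x : E} (hx : x ∈ X) (v : E) : h.unstableProj hx v ∈ Eu x :=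
  Submodule.projection_apply_mem _ v

theorem centerStableProj_apply_mem {x : E} (hx : x ∈ X) (v : E) :
    h.centerStableProj hx v ∈ Ecs x :=
  Submodule.projection_apply_mem _ v

theorem unstableProj_fderiv_apply {x x' : E} (hx : x ∈ X) (hx' : x' ∈ X) (hfx : f x' = x)
    (v : E) : h.unstableProj hx (fderiv ℝ f x' v) = fderiv ℝ f x' (h.unstableProj hx' v) := by
  subst hfx
  exact Submodule.projection_map_apply_of_map_le _ _ _ (h.map_unstable_le x' hx')
    (h.map_centerStable_le x' hx') v

theorem centerStableProj_fderiv_apply {x x' : E} (hx : x ∈ X) (hx' : x' ∈ X) (hfx : f x' = x)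
    (v : E) :
    h.centerStableProj hx (fderiv ℝ f x' v) = fderiv ℝ f x' (h.centerStableProj hx' v) := by
  subst hfx
  exact Submodule.projection_map_apply_of_map_le _ _ _ (h.map_centerStable_le x' hx')
    (h.map_unstable_le x' hx') v

theorem exists_norm_proj_le (hf : ContDiff ℝ 1 f) (hX : IsCompact X) (hC₂ : 0 ≤ C₂)
    (hC : C₂ < C₁) :
    ∃ Q > 0, ∀ x (hx : x ∈ X) v,
      ‖h.unstableProj hx v‖ ≤ Q * ‖v‖ ∧ ‖h.centerStableProj hx v‖ ≤ Q * ‖v‖ := by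
  obtain ⟨L, hL⟩ := hX.exists_bound_of_continuousOn
    (hf.continuous_fderiv one_ne_zero).continuousOn
  set K := (max L 0 + C₂) / (C₁ - C₂)
  have hK : 0 ≤ K := div_nonneg (by positivity) (sub_pos.mpr hC).le
  refine ⟨K + 1, by positivity, fun x hx v => ?_⟩
  have hsum := h.unstableProj_add_centerStableProj hx v
  have hu : ‖h.unstableProj hx v‖ ≤ K * ‖v‖ := by
    rw [div_mul_eq_mul_div, le_div_iff₀ (sub_pos.mpr hC), mul_comm]
    calc (C₁ - C₂) * ‖h.unstableProj hx v‖ ≤ (‖fderiv ℝ f x‖ + C₂) * ‖v‖ := by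
          simpa only [hsum] using (fderiv ℝ f x).sub_mul_norm_le_mul_norm_add hC₂
            (h.expand x hx _ (h.unstableProj_apply_mem hx v))
            (h.contract x hx _ (h.centerStableProj_apply_mem hx v))
      _ ≤ (max L 0 + C₂) * ‖v‖ := by gcongr; exact (hL x hx).trans (le_max_left L 0)
  constructor
  · linarith [norm_nonneg v]
  · calc ‖h.centerStableProj hx v‖ = ‖v - h.unstableProj hx v‖ := by
          rw [eq_sub_of_add_eq' hsum]
      _ ≤ (K + 1) * ‖v‖ := by linarith [norm_sub_le v (h.unstableProj hx v)]

theorem coneRecurrence {Q η d : ℝ} (hQ₀ : 0 ≤ Q) (hQ : ∀ x (hx : x ∈ X) v,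
      ‖h.unstableProj hx v‖ ≤ Q * ‖v‖ ∧ ‖h.centerStableProj hx v‖ ≤ Q * ‖v‖)
    (hd : ∀ z ∈ X, ∀ w, ‖w‖ ≤ d → ‖f (z + w) - f z - fderiv ℝ f z w‖ ≤ η * ‖w‖)
    {x y : ℕ → E} (hx : ∀ n, x n ∈ X) (hfx : ∀ n, f (x (n + 1)) = x n)
    (hfy : ∀ n, f (y (n + 1)) = y n) (hxy : ∀ n, dist (x n) (y n) ≤ d) :
    ConeRecurrence (fun n => ‖h.unstableProj (hx n) (y n - x n)‖)
      (fun n => ‖h.centerStableProj (hx n) (y n - x n)‖) (fun n => dist (x n) (y n))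
      C₁ C₂ (Q * η) := by
  have hdist (n : ℕ) : dist (x n) (y n) = ‖y n - x n‖ := dist_eq_norm' _ _
  set A := fun n => fderiv ℝ f (x (n + 1))
  have hrem (n : ℕ) : ‖y n - x n - A n (y (n + 1) - x (n + 1))‖ ≤ η * ‖y (n + 1) - x (n + 1)‖ := by
    simpa only [add_sub_cancel, hfx n, hfy n] using
      hd _ (hx (n + 1)) (y (n + 1) - x (n + 1)) ((hdist _).symm.trans_le (hxy _))
  have hw (n : ℕ) : y n - x n = A n (y (n + 1) - x (n + 1)) +
      (y n - x n - A n (y (n + 1) - x (n + 1))) := (add_sub_cancel _ _).symm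
  refine ⟨fun n => norm_nonneg _, fun n => norm_nonneg _, fun n => ?_, fun n => ?_, fun n => ?_⟩
  · simpa only [hdist, h.unstableProj_add_centerStableProj] using
      norm_add_le (h.unstableProj (hx n) (y n - x n)) (h.centerStableProj (hx n) (y n - x n))
  · have hA := h.expand _ (hx (n + 1)) _
      (h.unstableProj_apply_mem (hx (n + 1)) (y (n + 1) - x (n + 1)))
    have hr := (hQ _ (hx n) _).1.trans (mul_le_mul_of_nonneg_left (hrem n) hQ₀)
    rw [hdist, hw n, map_add, h.unstableProj_fderiv_apply (hx n) (hx (n + 1)) (hfx n)]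
    linarith [norm_sub_le_norm_add (A n (h.unstableProj (hx (n + 1)) (y (n + 1) - x (n + 1))))
      (h.unstableProj (hx n) (y n - x n - A n (y (n + 1) - x (n + 1))))]
  · have hA := h.contract _ (hx (n + 1)) _
      (h.centerStableProj_apply_mem (hx (n + 1)) (y (n + 1) - x (n + 1)))
    have hr := (hQ _ (hx n) _).2.trans (mul_le_mul_of_nonneg_left (hrem n) hQ₀)
    rw [hdist, hw n, map_add, h.centerStableProj_fderiv_apply (hx n) (hx (n + 1)) (hfx n)]
    linarith [norm_add_le (A n (h.centerStableProj (hx (n + 1)) (y (n + 1) - x (n + 1))))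
      (h.centerStableProj (hx n) (y n - x n - A n (y (n + 1) - x (n + 1))))]

theorem exists_dist_le_mul_inv_pow (h : IsPartiallyHyperbolicSplitting f X Eu Ecs C₁ C₂)
    (hf : ContDiff ℝ 1 f) (hX : IsCompact X) (hC₂ : 0 ≤ C₂)
    {ε ρ : ℝ} (hε : 0 < ε) (hgap : C₂ + 4 * ε ≤ C₁) (hρ : 0 < ρ) (hμ : C₂ + 2 * ε ≤ 1 / ρ) :
    ∃ d > 0, ∃ C > 0, ∀ x y : ℕ → E, (∀ n, x n ∈ X) → (∀ n, f (x (n + 1)) = x n) →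
      (∀ n, f (y (n + 1)) = y n) → (∀ n, dist (x n) (y n) ≤ d) →
      Tendsto (fun n => dist (x n) (y n) / ρ ^ n) atTop (𝓝 0) →
      ∀ n, dist (x n) (y n) ≤ C * (C₁ - 2 * ε)⁻¹ ^ n * dist (x 0) (y 0) := by
  obtain ⟨Q, hQ, hproj⟩ := h.exists_norm_proj_le hf hX hC₂ (by linarith)
  obtain ⟨d, hd, htaylor⟩ := hX.exists_norm_sub_sub_fderiv_le hf (div_pos hε hQ)
  refine ⟨d, hd, 2 * Q, by positivity, fun x y hx hfx hfy hxy hlim n => ?_⟩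
  have hrec := h.coneRecurrence hQ.le hproj htaylor hx hfx hfy hxy
  rw [mul_div_cancel₀ _ hQ.ne'] at hrec
  have hpos : 0 < C₁ - 2 * ε := by linarith
  calc dist (x n) (y n)
      ≤ 2 * ((C₁ - 2 * ε)⁻¹ ^ n * ‖h.unstableProj (hx 0) (y 0 - x 0)‖) :=
        hrec.le_two_mul_inv_pow_mul_of_tendsto hε.le hC₂ hgap hpos
          (fun n => (hproj _ _ _).2.trans_eq (by rw [dist_eq_norm'])) hρ hμ hlim n
    _ ≤ 2 * ((C₁ - 2 * ε)⁻¹ ^ n * (Q * dist (x 0) (y 0))) := by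
        gcongr
        rw [dist_eq_norm']
        exact (hproj _ (hx 0) _).1
    _ = 2 * Q * (C₁ - 2 * ε)⁻¹ ^ n * dist (x 0) (y 0) := by ring

end IsPartiallyHyperbolicSplitting

theorem stmt_17_general {E : Type*} [NormedAddCommGroup E] [InnerProductSpace ℝ E]
    (f : E → E) (hf : ContDiff ℝ 1 f)
    (finv : E → E) (hl : Function.LeftInverse finv f)
    (hr : Function.RightInverse finv f)
    (X : Set E) (hXcomp : IsCompact X) (hXinv : f '' X = X)
    (Eu Ecs : E → Submodule ℝ E)
    (hcompl : ∀ x ∈ X, IsCompl (Eu x) (Ecs x))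
    (hmapu : ∀ x ∈ X, Submodule.map (fderiv ℝ f x : E →ₗ[ℝ] E) (Eu x) = Eu (f x))
    (hmapcs : ∀ x ∈ X, Submodule.map (fderiv ℝ f x : E →ₗ[ℝ] E) (Ecs x) ≤ Ecs (f x))
    (C₁ C₂ : ℝ) (hC₁ : 1 < C₁) (hC₂ : 0 < C₂) (hC₂₁ : C₂ < C₁)
    (hexp : ∀ x ∈ X, ∀ v ∈ Eu x, C₁ * ‖v‖ ≤ ‖fderiv ℝ f x v‖)
    (hcs : ∀ x ∈ X, ∀ v ∈ Ecs x, ‖fderiv ℝ f x v‖ ≤ C₂ * ‖v‖)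
    (ρ : ℝ) (hρ₁ : C₂ < 1 / ρ) (hρpos : 0 < ρ) :
    ∃ δ₀ > (0 : ℝ), ∀ δ : ℝ, 0 < δ → δ ≤ δ₀ →
      ∃ C > (0 : ℝ), ∃ lam : ℝ, C₁⁻¹ < lam ∧ lam < 1 ∧
        ∀ x ∈ X, ∀ y : E,
          ((∀ n : ℕ, dist (finv^[n] x) (finv^[n] y) ≤ δ) ∧
            Tendsto (fun n : ℕ => dist (finv^[n] x) (finv^[n] y) / ρ ^ n) atTop (𝓝 0)) →
          ∀ n : ℕ, dist (finv^[n] x) (finv^[n] y) ≤ C * lam ^ n * dist x y := by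
  have hsplit : IsPartiallyHyperbolicSplitting f X Eu Ecs C₁ C₂ :=
    ⟨hcompl, fun x hx => (hmapu x hx).le, hmapcs, hexp, hcs⟩
  set t := min (C₁ - C₂) (min (1 / ρ - C₂) (C₁ - 1))
  have ht : 0 < t := by
    simp only [t, lt_min_iff, sub_pos]
    exact ⟨hC₂₁, hρ₁, hC₁⟩
  have ht₁ : t ≤ C₁ - C₂ := min_le_left _ _
  have ht₂ : t ≤ 1 / ρ - C₂ := (min_le_right _ _).trans (min_le_left _ _)
  have ht₃ : t ≤ C₁ - 1 := (min_le_right _ _).trans (min_le_right _ _)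
  obtain ⟨d, hd, C, hC, hcontract⟩ := hsplit.exists_dist_le_mul_inv_pow hf hXcomp hC₂.le
    (ε := t / 4) (by positivity) (by linarith) hρpos (by linarith)
  have hmaps : MapsTo finv X X := fun p hp => by
    obtain ⟨q, hq, rfl⟩ := hXinv.symm ▸ hp
    rwa [hl q]
  have hback (z : E) (n : ℕ) : f (finv^[n + 1] z) = finv^[n] z := by
    rw [Function.iterate_succ_apply', hr]
  refine ⟨d, hd, fun δ _ hδ => ⟨C, hC, (C₁ - 2 * (t / 4))⁻¹,
    (inv_lt_inv₀ (by linarith) (by linarith)).mpr (by linarith),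
    inv_lt_one_of_one_lt₀ (by linarith), fun x hx y ⟨hclose, hlim⟩ =>
      hcontract _ _ (fun n => hmaps.iterate n hx) (hback x) (hback y)
        (fun n => (hclose n).trans hδ) hlim⟩⟩

/-- exponential backward contraction inside local unstable
manifolds of a partially hyperbolic set (the unstable manifold theorem estimate):
for `δ > 0` sufficiently small there are `C > 0` and `λ ∈ (C₁⁻¹, 1)` such that
points of `W^u_δ(x)` satisfy `d(f^{-n}x, f^{-n}y) ≤ C λ^n d(x,y)`. -/
theorem stmt_17 {E : Type*} [NormedAddCommGroup E] [InnerProductSpace ℝ E]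
    [FiniteDimensional ℝ E]
    (f : E → E) (hf : ContDiff ℝ 1 f)
    (finv : E → E) (hl : Function.LeftInverse finv f)
    (hr : Function.RightInverse finv f) (hfinv : Continuous finv)
    (X : Set E) (hXcomp : IsCompact X) (hXinv : f '' X = X)
    (Eu Ecs : E → Submodule ℝ E)
    (hcompl : ∀ x ∈ X, IsCompl (Eu x) (Ecs x))
    (hmapu : ∀ x ∈ X, Submodule.map (fderiv ℝ f x : E →ₗ[ℝ] E) (Eu x) = Eu (f x))
    (hmapcs : ∀ x ∈ X, Submodule.map (fderiv ℝ f x : E →ₗ[ℝ] E) (Ecs x) ≤ Ecs (f x))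
    (C₁ C₂ : ℝ) (hC₁ : 1 < C₁) (hC₂ : 0 < C₂) (hC₂₁ : C₂ < C₁)
    (hexp : ∀ x ∈ X, ∀ v ∈ Eu x, C₁ * ‖v‖ ≤ ‖fderiv ℝ f x v‖)
    (hcs : ∀ x ∈ X, ∀ v ∈ Ecs x, ‖fderiv ℝ f x v‖ ≤ C₂ * ‖v‖)
    (ρ : ℝ) (hρ₁ : C₂ < 1 / ρ) (hρ₂ : 1 / ρ < C₁) (hρpos : 0 < ρ) :
    ∃ δ₀ > (0 : ℝ), ∀ δ : ℝ, 0 < δ → δ ≤ δ₀ →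
      ∃ C > (0 : ℝ), ∃ lam : ℝ, C₁⁻¹ < lam ∧ lam < 1 ∧
        ∀ x ∈ X, ∀ y : E,
          ((∀ n : ℕ, dist (finv^[n] x) (finv^[n] y) ≤ δ) ∧
            Tendsto (fun n : ℕ => dist (finv^[n] x) (finv^[n] y) / ρ ^ n) atTop (𝓝 0)) →
          ∀ n : ℕ, dist (finv^[n] x) (finv^[n] y) ≤ C * lam ^ n * dist x y :=
  stmt_17_general f hf finv hl hr X hXcomp hXinv Eu Ecs hcompl hmapu hmapcs C₁ C₂ hC₁ hC₂ hC₂₁ hexp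
    hcs ρ hρ₁ hρpos
end
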